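/- arXiv:2010.06744 — 3 statements merged into one kernel-verified Lean document; each statement's English description precedes it below -/
import Mathlib

section
/- In the plant allocation problem, if λ₁ = λ₂ on an open interval I (singular arc), then on I: λ₂ satisfies λ₂ = -1/x₂, hence λ₂' = -λ₂, so λ₂(t) = A·e^{-t} with A = -e^{t₁}/x₂(t₁) where t₁ is the start of I. -/
/-!
On the singular arc `λ₁ = λ₂`, the adjoint equation for `λ₁` collapses to `λ₂' = -λ₂`.
Comparing this with `λ₂' = 1 / x₂` (derivatives within an interval are unique) gives
`λ₂ = -1 / x₂`, and the linear equation `λ₂' = -λ₂` integrates to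
`λ₂(t) = λ₂(t₁) e^{t₁ - t}`.
-/

open Real Set

theorem Convex.eq_of_hasDerivWithinAt_zero {𝕜 G : Type*} [RCLike 𝕜] [NormedAddCommGroup G]
    [NormedSpace 𝕜 G] {f : 𝕜 → G} {s : Set 𝕜} (hs : Convex ℝ s)
    (hf : ∀ x ∈ s, HasDerivWithinAt f 0 s x) {x y : 𝕜} (hx : x ∈ s) (hy : y ∈ s) :
    f y = f x := by
  have := hs.norm_image_sub_le_of_norm_hasDerivWithin_le hf (fun _ _ => norm_zero.le) hx hy
  rwa [zero_mul, norm_le_zero_iff, sub_eq_zero] at this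

theorem Convex.eq_mul_exp_of_hasDerivWithinAt_const_mul {f : ℝ → ℝ} {s : Set ℝ} {c : ℝ}
    (hs : Convex ℝ s) (hf : ∀ t ∈ s, HasDerivWithinAt f (c * f t) s t) {a t : ℝ}
    (ha : a ∈ s) (ht : t ∈ s) : f t = f a * exp (c * (t - a)) := by
  have hderiv_zero : ∀ r ∈ s, HasDerivWithinAt (fun r => f r * exp (-c * r)) 0 s r := by
    intro r hr
    have hexp : HasDerivWithinAt (fun r => exp (-c * r)) (exp (-c * r) * -c) s r :=
      ((hasDerivAt_id r).const_mul (-c)).exp.hasDerivWithinAt.congr_deriv (by simp)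
    exact ((hf r hr).mul hexp).congr_deriv (by ring)
  have h := hs.eq_of_hasDerivWithinAt_zero hderiv_zero ha ht
  calc f t = f t * exp (-c * t) * exp (c * t) := by
        rw [mul_assoc, ← exp_add, show -c * t + c * t = 0 by ring, exp_zero, mul_one]
    _ = f a * exp (c * (t - a)) := by
        rw [h, mul_assoc, ← exp_add]
        congr 2
        ring

theorem plant_singular_adjoint_general (t₁ t₂ : ℝ)
    (x₂ lam1 lam2 u : ℝ → ℝ)
    (hl1 : ∀ t ∈ Set.Ico t₁ t₂,
      HasDerivWithinAt lam1 ((lam2 t - lam1 t) * u t - lam2 t) (Set.Ico t₁ t₂) t)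
    (hl2 : ∀ t ∈ Set.Ico t₁ t₂,
      HasDerivWithinAt lam2 (1 / x₂ t) (Set.Ico t₁ t₂) t)
    (hsing : ∀ t ∈ Set.Ico t₁ t₂, lam1 t = lam2 t) :
    ∀ t ∈ Set.Ico t₁ t₂,
      lam2 t = -1 / x₂ t ∧
      HasDerivWithinAt lam2 (-(lam2 t)) (Set.Ico t₁ t₂) t ∧
      lam2 t = (-(Real.exp t₁) / x₂ t₁) * Real.exp (-t) := by
  have hlam2_deriv : ∀ t ∈ Ico t₁ t₂, HasDerivWithinAt lam2 (-lam2 t) (Ico t₁ t₂) t := fun t ht => by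
    simpa [hsing t ht] using (hl1 t ht).congr_of_mem (fun x hx => (hsing x hx).symm) ht
  have hlam2_eq : ∀ t ∈ Ico t₁ t₂, lam2 t = -1 / x₂ t := fun t ht => by
    rw [neg_div, ← (uniqueDiffOn_Ico t₁ t₂ t ht).eq_deriv _ (hlam2_deriv t ht) (hl2 t ht), neg_neg]
  intro t ht
  have ht₁ : t₁ ∈ Ico t₁ t₂ := ⟨le_rfl, ht.1.trans_lt ht.2⟩
  refine ⟨hlam2_eq t ht, hlam2_deriv t ht, ?_⟩
  rw [(convex_Ico t₁ t₂).eq_mul_exp_of_hasDerivWithinAt_const_mul (f := lam2) (c := -1)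
      (fun r hr => by simpa using hlam2_deriv r hr) ht₁ ht, hlam2_eq t₁ ht₁,
    show -1 * (t - t₁) = t₁ + -t by ring, exp_add]
  ring

/-- Plant problem singular arc: if λ₁ = λ₂ on the interval I = [t₁, t₂), then on
I we have λ₂ = -1/x₂, λ₂' = -λ₂, and λ₂(t) = A·e^{-t} with A = -e^{t₁}/x₂(t₁). -/
theorem plant_singular_adjoint (t₁ t₂ : ℝ) (ht : t₁ < t₂)
    (x₂ lam1 lam2 u : ℝ → ℝ)
    (hx₂ : ∀ t ∈ Set.Ico t₁ t₂, x₂ t ≠ 0)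
    (hl1 : ∀ t ∈ Set.Ico t₁ t₂,
      HasDerivWithinAt lam1 ((lam2 t - lam1 t) * u t - lam2 t) (Set.Ico t₁ t₂) t)
    (hl2 : ∀ t ∈ Set.Ico t₁ t₂,
      HasDerivWithinAt lam2 (1 / x₂ t) (Set.Ico t₁ t₂) t)
    (hsing : ∀ t ∈ Set.Ico t₁ t₂, lam1 t = lam2 t) :
    ∀ t ∈ Set.Ico t₁ t₂,
      lam2 t = -1 / x₂ t ∧
      HasDerivWithinAt lam2 (-(lam2 t)) (Set.Ico t₁ t₂) t ∧
      lam2 t = (-(Real.exp t₁) / x₂ t₁) * Real.exp (-t) :=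
  plant_singular_adjoint_general t₁ t₂ x₂ lam1 lam2 u hl1 hl2 hsing
end

section
/- On a singular arc of the plant problem where λ₂ = -1/x₂ and λ₂' = 1/x₂, the reproductive state satisfies x₂' = x₂, and consequently 1 - u(t) = x₂(t)/x₁(t) on the singular interval. -/
/-! On the singular arc λ₂ is `-1/x₂`, whose derivative is `x₂'/x₂²`; comparing with the adjoint
equation `λ₂' = 1/x₂` forces `x₂' = x₂`, and the state equation `x₂' = (1 - u) x₁` then gives
`1 - u = x₂/x₁`. -/

variable {𝕜 : Type*} [NontriviallyNormedField 𝕜]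

theorem HasDerivAt.neg_one_div {f : 𝕜 → 𝕜} {f' t : 𝕜} (hf : HasDerivAt f f' t) (h0 : f t ≠ 0) :
    HasDerivAt (fun s => -1 / f s) (f' / f t ^ 2) t := by
  have h := (hf.inv h0).neg
  rw [neg_div, neg_neg] at h
  have hfun : (fun s => -1 / f s) = fun s => -(f s)⁻¹ := by
    ext s
    rw [neg_div, one_div]
  exact hfun ▸ h

theorem HasDerivAt.eq_self_of_eventuallyEq_neg_one_div {f g : 𝕜 → 𝕜} {f' t : 𝕜}
    (hf : HasDerivAt f f' t) (h0 : f t ≠ 0) (hg : HasDerivAt g (1 / f t) t)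
    (hgf : g =ᶠ[nhds t] fun s => -1 / f s) : f' = f t := by
  have h := hg.unique ((hf.neg_one_div h0).congr_of_eventuallyEq hgf)
  field_simp at h
  exact h.symm

/-- On the singular arc of the plant problem, where λ₂ = -1/x₂ and λ₂' = 1/x₂,
the reproductive state satisfies x₂' = x₂, and 1 - u = x₂/x₁. -/
theorem plant_singular_state (a b : ℝ) (x₁ x₂ lam2 u : ℝ → ℝ)
    (hx1 : ∀ t ∈ Set.Ioo a b, x₁ t ≠ 0)
    (hx2 : ∀ t ∈ Set.Ioo a b, x₂ t ≠ 0)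
    (hl2 : ∀ t ∈ Set.Ioo a b, HasDerivAt lam2 (1 / x₂ t) t)
    (hx2' : ∀ t ∈ Set.Ioo a b, HasDerivAt x₂ ((1 - u t) * x₁ t) t)
    (hlam : ∀ t ∈ Set.Ioo a b, lam2 t = -1 / x₂ t) :
    ∀ t ∈ Set.Ioo a b, HasDerivAt x₂ (x₂ t) t ∧ 1 - u t = x₂ t / x₁ t := by
  intro t ht
  have hlam_near : lam2 =ᶠ[nhds t] fun s => -1 / x₂ s :=
    Filter.eventually_of_mem (isOpen_Ioo.mem_nhds ht) hlam
  have key : (1 - u t) * x₁ t = x₂ t :=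
    (hx2' t ht).eq_self_of_eventuallyEq_neg_one_div (hx2 t ht) (hl2 t ht) hlam_near
  exact ⟨key ▸ hx2' t ht, eq_div_of_mul_eq (hx1 t ht) key⟩
end

section
/- Along the singular arc of the plant problem, the ratio x₂(t)/x₁(t) = 1/(C - t) for some constant C; combining with the exit-time relations T - t₂ = 1 + x₁(t₂)/x₂(t₂) yields C = T - 1. -/
/-- Along the plant singular arc x₂/x₁ = 1/(C - t); combining with the exit-time
relation T - t₂ = 1 + x₁(t₂)/x₂(t₂) yields C = T - 1. -/
theorem plant_singular_constant (C T t₂ x1 x2 : ℝ)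
    (hx1 : x1 ≠ 0) (hx2 : x2 ≠ 0) (hC : C - t₂ ≠ 0)
    (hratio : x2 / x1 = 1 / (C - t₂))
    (hexit : T - t₂ = 1 + x1 / x2) :
    C = T - 1 := by
  field_simp at hratio hexit
  have h : x2 * (C - (T - 1)) = 0 := by nlinarith [hratio, hexit]
  rcases mul_eq_zero.mp h with h | h
  · exact absurd h hx2
  · linarith
end
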